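/- arXiv:2409.19414 — 2 statements merged into one kernel-verified Lean document; each statement's English description precedes it below -/
import Mathlib

section
/- The map f(x) = ⊛_{i=1}^n h(x_i), sending a tuple x ∈ ℝ^n to the sequential circular convolution of the vectors h(x_i) = (-x_i, 1, 0,...,0) ∈ ℝ^{n+1}, is invariant under permutations of (x_1,...,x_n) and separating: f(x) = f(y) if and only if the multisets {x_1,...,x_n} and {y_1,...,y_n} are equal. -/
/-!
Read a vector `v : ZMod m → ℝ` as the polynomial `∑ k, v k X^k`. Then `h c` is `X - c`, and
circular convolution of vectors whose polynomials have degrees summing to less than `m` is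
polynomial multiplication, since no product of coefficients wraps around. Hence `f x` is the
coefficient vector of `∏ i, (X - xᵢ)`, a polynomial of degree `n < n + 1`: it is symmetric in the
`xᵢ`, and it determines the polynomial and therefore its multiset of roots `{x₁, …, xₙ}`.
-/

/-- Circular convolution over `ZMod m`. -/
def circConv {m : ℕ} [NeZero m] (u v : ZMod m → ℝ) : ZMod m → ℝ :=
  fun k => ∑ j : ZMod m, u j * v (k - j)

/-- Sequential circular convolution of a list of vectors; the empty convolution is
the unit impulse `δ₀`. -/
def circConvList {m : ℕ} [NeZero m] : List (ZMod m → ℝ) → (ZMod m → ℝ)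
  | [] => fun k => if k = 0 then 1 else 0
  | u :: l => circConv u (circConvList l)

open Polynomial Finset

section CoeffVec

variable {m : ℕ}

def coeffVec (m : ℕ) (p : ℝ[X]) : ZMod m → ℝ := fun k => p.coeff k.val

theorem coeffVec_one : coeffVec m 1 = fun k => if k = 0 then 1 else 0 := by
  funext k
  simp only [coeffVec, coeff_one, ZMod.val_eq_zero]

theorem coeffVec_X_sub_C [NeZero m] (c : ℝ) :
    coeffVec m (X - C c) = fun k => if k = 0 then -c else if k = 1 then 1 else 0 := by
  funext k
  by_cases hk0 : k = 0
  · simp [coeffVec, hk0]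
  by_cases hk1 : k = 1
  · subst hk1
    have hm : m ≠ 1 := by rintro rfl; exact hk0 (Subsingleton.elim _ _)
    simp [coeffVec, hk0, ZMod.val_one'' hm]
  · have hv0 : k.val ≠ 0 := by rwa [ne_eq, ZMod.val_eq_zero]
    have hv1 : k.val ≠ 1 := fun h => hk1 (by rw [← ZMod.natCast_zmod_val k, h, Nat.cast_one])
    simp [coeffVec, hk0, hk1, coeff_X, coeff_C, hv0, hv1.symm]

theorem coeffVec_injOn : Set.InjOn (coeffVec m) {p | p.natDegree < m} := by
  intro p (hp : p.natDegree < m) q (hq : q.natDegree < m) hpq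
  ext i
  by_cases hi : i < m
  · simpa [coeffVec, ZMod.val_cast_of_lt hi] using congrFun hpq i
  · rw [coeff_eq_zero_of_natDegree_lt (by omega), coeff_eq_zero_of_natDegree_lt (by omega)]

theorem ZMod.val_sub_natCast_of_val_lt [NeZero m] {k : ZMod m} {i : ℕ} (hki : k.val < i)
    (him : i < m) :
    (k - i).val = m + k.val - i := by
  have : k - i = ((m + k.val - i : ℕ) : ZMod m) := by
    rw [Nat.cast_sub (by omega)]
    push_cast
    rw [ZMod.natCast_self, ZMod.natCast_zmod_val, zero_add]
  rw [this, ZMod.val_cast_of_lt (by omega)]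

theorem circConv_coeffVec [NeZero m] {p q : ℝ[X]} (hpq : p.natDegree + q.natDegree < m) :
    circConv (coeffVec m p) (coeffVec m q) = coeffVec m (p * q) := by
  funext k
  have hk_lt := ZMod.val_lt k
  have hval (i : ℕ) (hi : i < m) : ((i : ZMod m)).val = i := ZMod.val_cast_of_lt hi
  simp only [circConv, coeffVec]
  rw [coeff_mul, Nat.sum_antidiagonal_eq_sum_range_succ (fun i j => p.coeff i * q.coeff j)]
  have reindex : ∑ j : ZMod m, p.coeff j.val * q.coeff (k - j).val =
      ∑ i ∈ range m, p.coeff (i : ZMod m).val * q.coeff (k - i).val :=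
    sum_nbij' ZMod.val (fun i => (i : ZMod m)) (fun j _ => mem_range.2 (ZMod.val_lt j))
      (fun _ _ => mem_univ _) (fun j _ => ZMod.natCast_zmod_val j)
      (fun i hi => hval i (mem_range.1 hi)) (fun j _ => by rw [ZMod.natCast_zmod_val])
  rw [reindex, ← sum_range_add_sum_Ico _ (show k.val + 1 ≤ m by omega)]
  -- a term that wraps around has total degree at least `m`
  have wrap : ∑ i ∈ Ico (k.val + 1) m, p.coeff (i : ZMod m).val * q.coeff (k - i).val = 0 := by
    refine sum_eq_zero fun i hi => ?_
    obtain ⟨hki, him⟩ := mem_Ico.1 hi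
    rw [hval i him]
    by_cases hip : p.natDegree < i
    · rw [coeff_eq_zero_of_natDegree_lt hip, zero_mul]
    · rw [coeff_eq_zero_of_natDegree_lt (p := q)
        (by rw [ZMod.val_sub_natCast_of_val_lt hki him]; omega), mul_zero]
  rw [wrap, add_zero]
  refine sum_congr rfl fun i hi => ?_
  have hik := mem_range.1 hi
  rw [ZMod.val_sub (by rw [hval i (by omega)]; omega), hval i (by omega)]

theorem circConvList_map_coeffVec [NeZero m] (ps : List ℝ[X])
    (hps : (ps.map natDegree).sum < m) :
    circConvList (ps.map (coeffVec m)) = coeffVec m ps.prod := by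
  induction ps with
  | nil => exact coeffVec_one.symm
  | cons p ps ih =>
    rw [List.map_cons, List.sum_cons] at hps
    have hprod := natDegree_list_prod_le ps
    rw [List.map_cons, circConvList, ih (by omega), circConv_coeffVec (by omega), List.prod_cons]

end CoeffVec

theorem exists_perm_of_map_univ_eq {ι α : Type*} [Fintype ι] [DecidableEq α] {x y : ι → α}
    (hxy : univ.val.map x = univ.val.map y) : ∃ σ : Equiv.Perm ι, ∀ i, y i = x (σ i) := by
  have hcard (c : α) : Fintype.card {i // y i = c} = Fintype.card {i // x i = c} := by
    have := congrArg (Multiset.count c) hxy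
    simp only [Multiset.count_map, Fintype.card_subtype] at this ⊢
    simpa [Finset.card, eq_comm] using this.symm
  exact ⟨Equiv.ofFiberEquiv fun c => Fintype.equivOfCardEq (hcard c),
    fun i => (Equiv.ofFiberEquiv_map _ i).symm⟩

/-- The map `f(x) = ⊛ᵢ h(xᵢ)`, with `h(c) = (-c, 1, 0, ..., 0) ∈ ℝ^{n+1}`,
is permutation invariant, and separating: `f x = f y` iff `y` is a permutation of `x`. -/
theorem circConv_representation_invariant_and_separating
    (n : ℕ) (h : ℝ → (ZMod (n + 1) → ℝ))
    (hh : ∀ c, h c = fun k => if k = 0 then -c else if k = 1 then 1 else 0)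
    (f : (Fin n → ℝ) → (ZMod (n + 1) → ℝ))
    (hf : ∀ x, f x = circConvList (List.ofFn fun i => h (x i))) :
    (∀ (x : Fin n → ℝ) (σ : Equiv.Perm (Fin n)), f (x ∘ σ) = f x) ∧
    (∀ x y : Fin n → ℝ, f x = f y ↔ ∃ σ : Equiv.Perm (Fin n), ∀ i, y i = x (σ i)) := by
  have hfx (x : Fin n → ℝ) : f x = coeffVec (n + 1) (∏ i, (X - C (x i))) := by
    have hdeg : ((List.ofFn fun i => X - C (x i)).map natDegree).sum < n + 1 := by
      simp [List.map_ofFn, Function.comp_def]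
    rw [hf, ← List.prod_ofFn, ← circConvList_map_coeffVec _ hdeg, List.map_ofFn]
    congr
    funext i
    exact (hh _).trans (coeffVec_X_sub_C _).symm
  have hinv (x : Fin n → ℝ) (σ : Equiv.Perm (Fin n)) : f (x ∘ σ) = f x := by
    rw [hfx, hfx]
    exact congrArg _ (Equiv.prod_comp σ fun i => X - C (x i))
  have hroots (x : Fin n → ℝ) : (∏ i, (X - C (x i))).roots = univ.val.map x := by
    rw [← roots_multiset_prod_X_sub_C (univ.val.map x), Multiset.map_map, prod_eq_multiset_prod]
    rfl
  refine ⟨hinv, fun x y => ⟨fun hxy => ?_, ?_⟩⟩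
  · rw [hfx, hfx] at hxy
    refine exists_perm_of_map_univ_eq ?_
    rw [← hroots, ← hroots, coeffVec_injOn (by simp) (by simp) hxy]
  · rintro ⟨σ, hσ⟩
    rw [show y = x ∘ σ from funext hσ, hinv]
end

section
/- No differentiable permutation-invariant multiset representation f̂ can be lower-Lipschitz with respect to the Wasserstein-1 distance: for n = 2 and any d, for every ε > 0 there exist multisets X_ε, Y_ε of size 2 in ℝ^d such that ‖f̂(X_ε) − f̂(Y_ε)‖ ≤ ε · W₁(X_ε, Y_ε). -/
/-- Wasserstein-1 distance between two size-2 multisets in `ℝ^d`, given as pairs. -/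
noncomputable def W1Pair {d : ℕ}
    (X Y : EuclideanSpace ℝ (Fin d) × EuclideanSpace ℝ (Fin d)) : ℝ :=
  min ((‖X.1 - Y.1‖ + ‖X.2 - Y.2‖) / 2) ((‖X.1 - Y.2‖ + ‖X.2 - Y.1‖) / 2)

/-!
Restrict `f` to the line `t ↦ (x₀ + t v, x₀ - t v)` through the diagonal. By symmetry of `f`
this restriction is even in `t`, so its derivative at `0` vanishes and `f` moves by `o(t)`,
while the two multisets `{x₀ + t v, x₀ - t v}` and `{x₀, x₀}` are at distance exactly `t ‖v‖`.
-/

open Asymptotics Filter Topology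

theorem Function.Even.deriv_zero {𝕜 F : Type*} [NontriviallyNormedField 𝕜] [CharZero 𝕜]
    [NormedAddCommGroup F] [NormedSpace 𝕜 F] {g : 𝕜 → F} (hg : g.Even) : deriv g 0 = 0 := by
  have h : deriv g 0 = -deriv g 0 := by
    simpa [funext hg] using deriv_comp_neg g (0 : 𝕜)
  have h2 : (2 : 𝕜) • deriv g 0 = 0 := by
    rw [two_smul]; nth_rewrite 1 [h]; exact neg_add_cancel _
  exact (smul_eq_zero.mp h2).resolve_left two_ne_zero

theorem HasDerivAt.exists_pos_norm_sub_le_of_deriv_zero {F : Type*} [NormedAddCommGroup F]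
    [NormedSpace ℝ F] {g : ℝ → F} {x : ℝ} (hg : HasDerivAt g 0 x) {ε : ℝ} (hε : 0 < ε) :
    ∃ t > 0, ‖g (x + t) - g x‖ ≤ ε * t := by
  have hsmall : ∀ᶠ t in 𝓝 0, ‖g (x + t) - g x‖ ≤ ε * ‖t‖ := by
    simpa using (hasDerivAt_iff_isLittleO_nhds_zero.mp hg).def hε
  obtain ⟨t, hle, ht⟩ :=
    ((hsmall.filter_mono nhdsWithin_le_nhds).and (self_mem_nhdsWithin (s := Set.Ioi 0))).exists
  exact ⟨t, ht, by rwa [Real.norm_of_nonneg (le_of_lt ht)] at hle⟩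

theorem W1Pair_add_sub_self {d : ℕ} (x w : EuclideanSpace ℝ (Fin d)) :
    W1Pair (x + w, x - w) (x, x) = ‖w‖ := by
  simp [W1Pair]

/-- No differentiable permutation-invariant multiset representation
is lower-Lipschitz w.r.t. the Wasserstein-1 distance: for `n = 2` and any `d`, for
every `ε > 0` there are distinct size-2 multisets `X_ε, Y_ε ⊆ ℝ^d` with
`‖f̂(X_ε) − f̂(Y_ε)‖ ≤ ε · W₁(X_ε, Y_ε)`. -/
theorem no_lower_lipschitz_multiset_representation
    (d m : ℕ) (hd : 0 < d)
    (f : EuclideanSpace ℝ (Fin d) × EuclideanSpace ℝ (Fin d) → EuclideanSpace ℝ (Fin m))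
    (hdiff : Differentiable ℝ f)
    (hsymm : ∀ u v, f (u, v) = f (v, u))
    (ε : ℝ) (hε : 0 < ε) :
    ∃ X Y : EuclideanSpace ℝ (Fin d) × EuclideanSpace ℝ (Fin d),
      0 < W1Pair X Y ∧ ‖f X - f Y‖ ≤ ε * W1Pair X Y := by
  set v : EuclideanSpace ℝ (Fin d) := EuclideanSpace.single ⟨0, hd⟩ 1
  set g : ℝ → EuclideanSpace ℝ (Fin m) := fun t => f (t • v, -(t • v))
  have hg_even : g.Even := fun t => by simp only [g, neg_smul, neg_neg, hsymm]
  have hg_diff : DifferentiableAt ℝ g 0 := by fun_prop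
  obtain ⟨t, ht, hle⟩ :=
    (hg_even.deriv_zero ▸ hg_diff.hasDerivAt).exists_pos_norm_sub_le_of_deriv_zero hε
  have hW : W1Pair (t • v, -(t • v)) (0, 0) = t := by
    simpa [v, norm_smul, abs_of_pos ht] using W1Pair_add_sub_self 0 (t • v)
  refine ⟨(t • v, -(t • v)), (0, 0), by rwa [hW], ?_⟩
  simpa [g, hW] using hle
end
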